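/- Let $v_1,\ldots,v_n$ be nonzero vectors in $\mathbb{R}^d$ with $\|v_i\|_2 \le 1$ and let $\varepsilon_1,\ldots,\varepsilon_n$ be independent Rademacher variables. Then for every $x \in \mathbb{R}^d$, $\mathbb{P}(v_1\varepsilon_1 + \cdots + v_n\varepsilon_n = x) \le \binom{n}{\lfloor n/2 \rfloor}/2^n$. (Kleitman's theorem) -/

import Mathlib

/-!
Pick a linear functional `f` that vanishes at none of the `v i`; since the Rademacher law is
symmetric, flipping the signs of `ε i` and `v i` together lets us assume `f (v i) > 0`.
Encode a sign pattern by the set `A` of indices carrying `+1`. Then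
`f (∑ i, ε i • v i) = 2 * ∑ i ∈ A, f (v i) - ∑ i, f (v i)` is strictly increasing in `A`,
so the patterns with `∑ i, ε i • v i = x` form an antichain. By Sperner there are at most
`n.choose (n / 2)` of them, and each pattern has probability `2⁻¹ ^ n`.
-/

open MeasureTheory ProbabilityTheory

/-- A Rademacher random variable takes values `1` and `-1` each with probability `1/2`. -/
def IsRademacher {Ω : Type*} [MeasurableSpace Ω] (μ : Measure Ω) (f : Ω → ℝ) : Prop :=
  μ {ω | f ω = 1} = 1 / 2 ∧ μ {ω | f ω = -1} = 1 / 2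

open Finset

section Combinatorics

variable {ι : Type*} [Fintype ι] [DecidableEq ι]

def signVec (A : Finset ι) (i : ι) : ℝ := if i ∈ A then 1 else -1

lemma sum_signVec_mul (A : Finset ι) (a : ι → ℝ) :
    ∑ i, signVec A i * a i = 2 * ∑ i ∈ A, a i - ∑ i, a i := by
  have h : ∀ i, signVec A i * a i = 2 * (if i ∈ A then a i else 0) - a i := fun i => by
    unfold signVec; split_ifs <;> ring
  simp only [h, sum_sub_distrib, ← mul_sum, sum_ite_mem, univ_inter]

lemma isAntichain_setOf_sum_signVec_smul_eq {E : Type*} [AddCommGroup E] [Module ℝ E]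
    {v : ι → E} {f : Module.Dual ℝ E} (hf : ∀ i, 0 < f (v i)) (x : E) :
    IsAntichain (· ⊆ ·) {A : Finset ι | ∑ i, signVec A i • v i = x} := by
  have hfA : ∀ A : Finset ι, f (∑ i, signVec A i • v i) = 2 * ∑ i ∈ A, f (v i) - ∑ i, f (v i) := by
    intro A
    simp only [map_sum, map_smul, smul_eq_mul, sum_signVec_mul]
  intro A hA B hB hne hAB
  obtain ⟨j, hjB, hjA⟩ := exists_of_ssubset (hAB.ssubset_of_ne hne)
  have hlt : ∑ i ∈ A, f (v i) < ∑ i ∈ B, f (v i) :=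
    sum_lt_sum_of_subset hAB hjB hjA (hf j) fun i _ _ => (hf i).le
  have heq := congrArg f (hA.trans hB.symm)
  rw [hfA, hfA] at heq
  linarith

end Combinatorics

section Rademacher

variable {Ω : Type*} [MeasurableSpace Ω] {μ : Measure Ω}

lemma IsRademacher.const_mul {f : Ω → ℝ} (h : IsRademacher μ f) {c : ℝ} (hc : c = 1 ∨ c = -1) :
    IsRademacher μ (fun ω => c * f ω) := by
  rcases hc with rfl | rfl
  · simpa using h
  · simp only [IsRademacher, neg_one_mul, neg_eq_iff_eq_neg, neg_neg]
    exact h.symm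

lemma IsRademacher.ae_eq_one_or_eq_neg_one [IsProbabilityMeasure μ] {f : Ω → ℝ}
    (hf : Measurable f) (h : IsRademacher μ f) : ∀ᵐ ω ∂μ, f ω = 1 ∨ f ω = -1 := by
  have hdisj : Disjoint {ω | f ω = 1} {ω | f ω = -1} :=
    Set.disjoint_left.2 fun ω (h1 : f ω = 1) (h2 : f ω = -1) => by norm_num [h1] at h2
  have hmeas : MeasurableSet ({ω | f ω = 1} ∪ {ω | f ω = -1}) :=
    (hf (measurableSet_singleton _)).union (hf (measurableSet_singleton _))
  have hone : μ ({ω | f ω = 1} ∪ {ω | f ω = -1}) = 1 := by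
    rw [measure_union hdisj (hf (measurableSet_singleton _)), h.1, h.2, ENNReal.add_halves]
  exact mem_ae_iff.2 ((prob_compl_eq_zero_iff hmeas).2 hone)

variable {ι : Type*} [Fintype ι] [DecidableEq ι] {ε : ι → Ω → ℝ}

lemma measure_forall_eq_signVec (hindep : iIndepFun ε μ) (hrad : ∀ i, IsRademacher μ (ε i))
    (A : Finset ι) : μ {ω | ∀ i, ε i ω = signVec A i} = (2 ^ Fintype.card ι)⁻¹ := by
  have hA : ∀ i, μ {ω | ε i ω = signVec A i} = 2⁻¹ := fun i => by
    unfold signVec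
    split_ifs
    · simpa using (hrad i).1
    · simpa using (hrad i).2
  rw [Set.ofPred_forall, hindep.meas_iInter (s := fun i => {ω | ε i ω = signVec A i})
    fun i => ⟨{signVec A i}, measurableSet_singleton _, rfl⟩]
  simp [hA, ENNReal.inv_pow]

lemma measure_le_card_filter_signVec_div [IsProbabilityMeasure μ] (hmeas : ∀ i, Measurable (ε i))
    (hindep : iIndepFun ε μ) (hrad : ∀ i, IsRademacher μ (ε i)) (P : (ι → ℝ) → Prop)
    [DecidablePred P] :
    μ {ω | P (fun i => ε i ω)} ≤ #{A : Finset ι | P (signVec A)} / 2 ^ Fintype.card ι := by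
  set 𝒜 : Finset (Finset ι) := {A | P (signVec A)}
  have hcover : {ω | P (fun i => ε i ω)} ≤ᵐ[μ] ⋃ A ∈ 𝒜, {ω | ∀ i, ε i ω = signVec A i} := by
    filter_upwards [ae_all_iff.2 fun i => (hrad i).ae_eq_one_or_eq_neg_one (hmeas i)]
      with ω hω (hP : P _)
    have hsign : (fun i => ε i ω) = signVec {i | ε i ω = 1} := funext fun i => by
      rcases hω i with h | h <;> simp [signVec, h]
    show ω ∈ ⋃ A ∈ _, _
    refine Set.mem_biUnion (x := ({i | ε i ω = 1} : Finset ι)) ?_ (congrFun hsign)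
    exact mem_filter.2 ⟨mem_univ _, hsign ▸ hP⟩
  calc μ {ω | P (fun i => ε i ω)}
      ≤ μ (⋃ A ∈ 𝒜, {ω | ∀ i, ε i ω = signVec A i}) := measure_mono_ae hcover
    _ ≤ ∑ A ∈ 𝒜, μ {ω | ∀ i, ε i ω = signVec A i} :=
        measure_biUnion_finset_le _ _
    _ = _ := by simp [measure_forall_eq_signVec hindep hrad, div_eq_mul_inv]

end Rademacher

section Kleitman

variable {Ω : Type*} [MeasurableSpace Ω] {μ : Measure Ω} [IsProbabilityMeasure μ]
  {ι : Type*} [Fintype ι] {ε : ι → Ω → ℝ} {E : Type*} [AddCommGroup E] [Module ℝ E]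

lemma measure_sum_smul_eq_le_of_dual_pos (hmeas : ∀ i, Measurable (ε i))
    (hindep : iIndepFun ε μ) (hrad : ∀ i, IsRademacher μ (ε i)) {v : ι → E}
    {f : Module.Dual ℝ E} (hf : ∀ i, 0 < f (v i)) (x : E) :
    μ {ω | ∑ i, ε i ω • v i = x}
      ≤ (Fintype.card ι).choose (Fintype.card ι / 2) / 2 ^ Fintype.card ι := by
  classical
  calc μ {ω | ∑ i, ε i ω • v i = x}
      ≤ #{A : Finset ι | ∑ i, signVec A i • v i = x} / 2 ^ Fintype.card ι :=
        measure_le_card_filter_signVec_div hmeas hindep hrad (fun e => ∑ i, e i • v i = x)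
    _ ≤ _ := by
        gcongr
        exact_mod_cast IsAntichain.sperner
          (by simpa using isAntichain_setOf_sum_signVec_smul_eq hf x)

theorem measure_sum_smul_eq_le (hmeas : ∀ i, Measurable (ε i))
    (hindep : iIndepFun ε μ) (hrad : ∀ i, IsRademacher μ (ε i)) {v : ι → E}
    (hv : ∀ i, v i ≠ 0) (x : E) :
    μ {ω | ∑ i, ε i ω • v i = x}
      ≤ (Fintype.card ι).choose (Fintype.card ι / 2) / 2 ^ Fintype.card ι := by
  obtain ⟨f, hf⟩ := Module.exists_dual_forall_apply_ne_zero (K := ℝ) v hv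
  set s : ι → ℝ := fun i => if 0 < f (v i) then 1 else -1
  have hs : ∀ i, s i = 1 ∨ s i = -1 := fun i => by
    unfold s; split_ifs <;> simp
  have hpos : ∀ i, 0 < f (s i • v i) := fun i => by
    simp only [map_smul, smul_eq_mul, s]
    split_ifs with h
    · simpa using h
    · simpa using lt_of_le_of_ne (not_lt.1 h) (hf i)
  have hflip : ∀ ω, ∑ i, (s i * ε i ω) • (s i • v i) = ∑ i, ε i ω • v i := fun ω =>
    sum_congr rfl fun i _ => by
      have : s i * ε i ω * s i = ε i ω := by rcases hs i with h | h <;> rw [h] <;> ring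
      rw [smul_smul, this]
  simpa only [hflip] using measure_sum_smul_eq_le_of_dual_pos (ε := fun i ω => s i * ε i ω)
    (fun i => (hmeas i).const_mul _)
    (hindep.comp (fun i x => s i * x) fun i => measurable_const_mul _)
    (fun i => (hrad i).const_mul (hs i)) hpos x

end Kleitman

theorem kleitman_littlewood_offord_general
    {Ω : Type*} [MeasurableSpace Ω] (μ : Measure Ω) [IsProbabilityMeasure μ]
    (d n : ℕ) (v : ℕ → EuclideanSpace ℝ (Fin d))
    (hv0 : ∀ i < n, v i ≠ 0)
    (ε : ℕ → Ω → ℝ) (hmeas : ∀ i, Measurable (ε i))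
    (hindep : iIndepFun ε μ)
    (hrad : ∀ i, IsRademacher μ (ε i))
    (x : EuclideanSpace ℝ (Fin d)) :
    μ {ω | ∑ i ∈ Finset.range n, ε i ω • v i = x}
      ≤ (n.choose (n / 2) : ENNReal) / 2 ^ n := by
  simpa only [Fintype.card_fin, Finset.sum_range] using
    measure_sum_smul_eq_le (ι := Fin n) (ε := fun i => ε i) (fun i => hmeas i)
      (hindep.precomp Fin.val_injective) (fun i => hrad i) (v := fun i => v i)
      (fun i => hv0 i i.2) x

theorem kleitman_littlewood_offord
    {Ω : Type*} [MeasurableSpace Ω] (μ : Measure Ω) [IsProbabilityMeasure μ]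
    (d n : ℕ) (v : ℕ → EuclideanSpace ℝ (Fin d))
    (hv0 : ∀ i < n, v i ≠ 0) (hv1 : ∀ i < n, ‖v i‖ ≤ 1)
    (ε : ℕ → Ω → ℝ) (hmeas : ∀ i, Measurable (ε i))
    (hindep : iIndepFun ε μ)
    (hrad : ∀ i, IsRademacher μ (ε i))
    (x : EuclideanSpace ℝ (Fin d)) :
    μ {ω | ∑ i ∈ Finset.range n, ε i ω • v i = x}
      ≤ (n.choose (n / 2) : ENNReal) / 2 ^ n :=
  kleitman_littlewood_offord_general μ d n v hv0 ε hmeas hindep hrad x
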